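/- Let V be an n-dimensional Chebyshev subspace of C([-1,1]) with basis (v_1,...,v_n), let x^1,...,x^m be distinct points of [-1,1], let I ⊆ [-1,1] be an interval containing none of the points x^1,...,x^m, and let S ⊆ {1,...,m} with |S| = n. If for some z ∈ I the vector supported on S whose S-entries are M_S^{-1} b(z) is a minimizer of ‖a‖₁ subject to Ma = b(z), then for every x ∈ I the vector supported on S whose S-entries are M_S^{-1} b(x) is a minimizer of ‖a‖₁ subject to Ma = b(x). -/

import Mathlib

/-!
By Cramer's rule the coefficients `c(x) = M_S⁻¹ b(x)` are ratios of determinants of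
interpolation matrices of the Chebyshev space, so they never vanish off the nodes and therefore
keep their signs on `I`. Minimality at `z`, tested against perturbations that move a little mass
onto one index outside `S`, shows that `w = M_S⁻ᵀ sign c(z)` satisfies `|(wᵀ M)ᵢ| ≤ 1`. As
`sign c(x) = sign c(z)` for `x ∈ I`, this same `w` certifies minimality at `x` by weak duality.
-/

open Matrix

/-- An `n`-dimensional subspace `V` of `C(X, ℝ)` is a Chebyshev space if for all
`n` distinct points and all prescribed values there is a unique interpolant in `V`. -/
def IsChebyshev {X : Type*} [TopologicalSpace X] (n : ℕ) (V : Submodule ℝ C(X, ℝ)) : Prop :=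
  Module.finrank ℝ V = n ∧
    ∀ ξ : Fin n → X, Function.Injective ξ → ∀ γ : Fin n → ℝ,
      ∃! v : C(X, ℝ), v ∈ V ∧ ∀ i, v (ξ i) = γ i

/-- The vector of `ℝ^m` supported on the image of `σ : Fin n → Fin m`
whose entry at `σ l` equals `c l`. -/
def sparseExt {n m : ℕ} (σ : Fin n → Fin m) (c : Fin n → ℝ) : Fin m → ℝ :=
  fun i => ∑ l, if i = σ l then c l else 0

open Filter Topology SignType

section SparseExt

variable {n m : ℕ} {σ : Fin n → Fin m}

lemma sparseExt_apply (hσ : Function.Injective σ) (c : Fin n → ℝ) (l : Fin n) :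
    sparseExt σ c (σ l) = c l := by
  simp [sparseExt, hσ.eq_iff]

lemma sparseExt_eq_zero_of_forall_ne (c : Fin n → ℝ) {i : Fin m} (hi : ∀ l, i ≠ σ l) :
    sparseExt σ c i = 0 :=
  Finset.sum_eq_zero fun l _ => if_neg (hi l)

lemma sum_abs_sparseExt (hσ : Function.Injective σ) (c : Fin n → ℝ) :
    ∑ i, |sparseExt σ c i| = ∑ l, |c l| := by
  rw [← Finset.sum_subset (Finset.subset_univ (Finset.univ.image σ)), Finset.sum_image hσ.injOn]
  · simp [sparseExt_apply hσ]
  · intro i _ hi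
    rw [sparseExt_eq_zero_of_forall_ne c fun l hl => hi (Finset.mem_image.2
      ⟨l, Finset.mem_univ l, hl.symm⟩), abs_zero]

lemma sum_abs_sparseExt_add_single (hσ : Function.Injective σ) (c : Fin n → ℝ)
    {i : Fin m} (hi : ∀ l, i ≠ σ l) (t : ℝ) :
    ∑ k, |(sparseExt σ c + Pi.single i t : Fin m → ℝ) k| = ∑ l, |c l| + |t| := by
  have hsplit : ∀ k, |(sparseExt σ c + Pi.single i t : Fin m → ℝ) k| =
      |sparseExt σ c k| + (Pi.single i |t| : Fin m → ℝ) k := by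
    intro k
    rcases eq_or_ne k i with rfl | hk
    · simp [sparseExt_eq_zero_of_forall_ne c hi]
    · simp [Pi.single_eq_of_ne hk]
  rw [Finset.sum_congr rfl fun k _ => hsplit k, Finset.sum_add_distrib, sum_abs_sparseExt hσ,
    Finset.sum_pi_single', if_pos (Finset.mem_univ i)]

lemma mulVec_sparseExt (M : Matrix (Fin n) (Fin m) ℝ) (c : Fin n → ℝ) :
    M *ᵥ sparseExt σ c = M.submatrix id σ *ᵥ c := by
  funext j
  simp only [mulVec, dotProduct, sparseExt, Finset.mul_sum, mul_ite, mul_zero]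
  rw [Finset.sum_comm]
  simp

lemma mulVec_sparseExt_inv_mulVec {M : Matrix (Fin n) (Fin m) ℝ}
    (hB : IsUnit (M.submatrix id σ).det) (b : Fin n → ℝ) :
    M *ᵥ sparseExt σ ((M.submatrix id σ)⁻¹ *ᵥ b) = b := by
  rw [mulVec_sparseExt, mulVec_mulVec, mul_nonsing_inv _ hB, one_mulVec]

end SparseExt

def IsL1Minimizer {κ ι : Type*} [Fintype κ] [Fintype ι] (M : Matrix κ ι ℝ) (b : κ → ℝ)
    (a₀ : ι → ℝ) : Prop :=
  ∀ a : ι → ℝ, M *ᵥ a = b → ∑ i, |a₀ i| ≤ ∑ i, |a i|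

lemma isL1Minimizer_of_abs_vecMul_le_one {κ ι : Type*} [Fintype κ] [Fintype ι]
    {M : Matrix κ ι ℝ} {b : κ → ℝ} {a₀ : ι → ℝ} (w : κ → ℝ) (hw : ∀ i, |(w ᵥ* M) i| ≤ 1)
    (hval : ∑ i, |a₀ i| = w ⬝ᵥ b) : IsL1Minimizer M b a₀ := by
  rintro a rfl
  rw [hval, dotProduct_mulVec]
  refine Finset.sum_le_sum fun i _ => ?_
  calc (w ᵥ* M) i * a i ≤ |(w ᵥ* M) i| * |a i| := by rw [← abs_mul]; exact le_abs_self _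
    _ ≤ |a i| := mul_le_of_le_one_left (abs_nonneg _) (hw i)

lemma abs_le_one_of_eventually_mul_le_abs {k : ℝ} (h : ∀ᶠ t in 𝓝 0, t * k ≤ |t|) :
    |k| ≤ 1 := by
  have hneg : ∀ᶠ t in 𝓝 (0 : ℝ), -t * k ≤ |-t| :=
    (continuous_neg.tendsto' 0 0 neg_zero).eventually h
  obtain ⟨t, ⟨hpos, hneg⟩, ht⟩ :=
    ((h.and hneg).filter_mono nhdsWithin_le_nhds |>.and self_mem_nhdsWithin).exists
      (f := 𝓝[>] (0 : ℝ))
  rw [abs_neg, abs_of_pos ht] at hneg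
  rw [abs_of_pos ht] at hpos
  rw [abs_le]
  constructor <;> nlinarith

lemma eventually_sum_abs_sub_mul_eq {ι : Type*} [Fintype ι] {c : ι → ℝ} (hc : ∀ l, c l ≠ 0)
    (d : ι → ℝ) :
    ∀ᶠ t in 𝓝 (0 : ℝ), ∑ l, |c l - t * d l| =
      ∑ l, |c l| - t * ((fun l => (sign (c l) : ℝ)) ⬝ᵥ d) := by
  have hsign : ∀ l, ∀ᶠ t in 𝓝 (0 : ℝ), |c l - t * d l| = |c l| - t * (sign (c l) * d l) := by
    intro l
    have hcont : Tendsto (fun t : ℝ => (sign (c l) : ℝ) * (c l - t * d l)) (𝓝 0)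
        (𝓝 |c l|) := by
      rw [← sign_mul_self]
      simpa using ((continuous_const.sub (continuous_id.mul continuous_const)).const_mul
        (sign (c l) : ℝ)).tendsto' (0 : ℝ) _ (by simp)
    filter_upwards [hcont.eventually (eventually_gt_nhds (abs_pos.2 (hc l)))] with t ht
    rcases (hc l).lt_or_gt with hneg | hpos
    · simp only [sign_neg hneg, SignType.coe_neg_one] at ht ⊢
      rw [abs_of_neg hneg, abs_of_neg (by linarith)]
      ring
    · simp only [sign_pos hpos, SignType.coe_one] at ht ⊢
      rw [abs_of_pos hpos, abs_of_pos (by linarith)]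
      ring
  filter_upwards [eventually_all.2 hsign] with t ht
  simp only [ht, Finset.sum_sub_distrib, dotProduct, Finset.mul_sum]

lemma IsL1Minimizer.abs_vecMul_le_one {n m : ℕ} {M : Matrix (Fin n) (Fin m) ℝ}
    {σ : Fin n → Fin m} (hσ : Function.Injective σ) (hB : IsUnit (M.submatrix id σ).det)
    {c : Fin n → ℝ} (hc : ∀ l, c l ≠ 0)
    (hmin : IsL1Minimizer M (M *ᵥ sparseExt σ c) (sparseExt σ c)) (i : Fin m) :
    |((fun l => (sign (c l) : ℝ)) ᵥ* (M.submatrix id σ)⁻¹ ᵥ* M) i| ≤ 1 := by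
  set B := M.submatrix id σ
  set ε : Fin n → ℝ := fun l => sign (c l)
  by_cases hi : ∃ l, i = σ l
  · obtain ⟨l, rfl⟩ := hi
    have hcol : (ε ᵥ* B⁻¹ ᵥ* M) (σ l) = (ε ᵥ* B⁻¹ ᵥ* B) l := rfl
    rw [hcol, vecMul_vecMul, nonsing_inv_mul _ hB, vecMul_one]
    rcases (hc l).lt_or_gt with h | h <;> simp [ε, h]
  · push Not at hi
    set d := B⁻¹ *ᵥ Mᵀ i
    have hvalue : (ε ᵥ* B⁻¹ ᵥ* M) i = ε ⬝ᵥ d := by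
      rw [dotProduct_mulVec]
      rfl
    rw [hvalue]
    refine abs_le_one_of_eventually_mul_le_abs ?_
    filter_upwards [eventually_sum_abs_sub_mul_eq hc d] with t ht
    have hfeas : M *ᵥ (sparseExt σ (c - t • d) + Pi.single i t) = M *ᵥ sparseExt σ c := by
      rw [mulVec_add, mulVec_sparseExt, mulVec_sparseExt, mulVec_single, mulVec_sub, mulVec_smul,
        mulVec_mulVec, mul_nonsing_inv _ hB, one_mulVec]
      funext j
      simp
    have hle := hmin _ hfeas
    rw [sum_abs_sparseExt hσ, sum_abs_sparseExt_add_single hσ _ hi] at hle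
    simp only [Pi.sub_apply, Pi.smul_apply, smul_eq_mul, ht] at hle
    linarith

lemma IsPreconnected.sign_eq_of_ne_zero {X : Type*} [TopologicalSpace X] {s : Set X}
    (hs : IsPreconnected s) {f : X → ℝ} (hf : ContinuousOn f s) (hf0 : ∀ x ∈ s, f x ≠ 0)
    {a b : X} (ha : a ∈ s) (hb : b ∈ s) : sign (f a) = sign (f b) := by
  have hcross : ∀ {a b}, a ∈ s → b ∈ s → ¬(f a < 0 ∧ 0 < f b) := fun ha hb ⟨hneg, hpos⟩ => by
    obtain ⟨x, hx, hx0⟩ := hs.intermediate_value ha hb hf ⟨hneg.le, hpos.le⟩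
    exact hf0 x hx hx0
  rcases (hf0 a ha).lt_or_gt with h1 | h1 <;> rcases (hf0 b hb).lt_or_gt with h2 | h2
  · rw [sign_neg h1, sign_neg h2]
  · exact absurd ⟨h1, h2⟩ (hcross ha hb)
  · exact absurd ⟨h2, h1⟩ (hcross hb ha)
  · rw [sign_pos h1, sign_pos h2]

lemma Function.Injective.update_of_forall_ne {α β : Type*} [DecidableEq α] {ξ : α → β}
    (hξ : Function.Injective ξ) {b : β} (hb : ∀ a, ξ a ≠ b) (a₀ : α) :
    Function.Injective (Function.update ξ a₀ b) := by
  intro a a' h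
  by_cases ha : a = a₀ <;> by_cases ha' : a' = a₀
  · rw [ha, ha']
  · simp only [ha, ha', Function.update_self, Function.update_of_ne, ne_eq, not_false_eq_true] at h
    exact absurd h.symm (hb a')
  · simp only [ha, ha', Function.update_self, Function.update_of_ne, ne_eq, not_false_eq_true] at h
    exact absurd h (hb a)
  · simp only [ha, ha', Function.update_of_ne, ne_eq, not_false_eq_true] at h
    exact hξ h

section Chebyshev

variable {X : Type*} [TopologicalSpace X] {n : ℕ} {V : Submodule ℝ C(X, ℝ)}
  {v : Fin n → C(X, ℝ)} {ξ : Fin n → X}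

lemma IsChebyshev.det_ne_zero (hV : IsChebyshev n V) (hv_mem : ∀ j, v j ∈ V)
    (hv_indep : LinearIndependent ℝ v) (hξ : Function.Injective ξ) :
    (Matrix.of fun j l => v j (ξ l)).det ≠ 0 := by
  intro hdet
  obtain ⟨c, hc, hcv⟩ := exists_vecMul_eq_zero_iff.2 hdet
  have hvanish : ∀ l, (∑ j, c j • v j) (ξ l) = 0 := fun l => by
    simpa [vecMul, dotProduct] using congrFun hcv l
  obtain ⟨w, -, huniq⟩ := hV.2 ξ hξ 0
  have hzero : ∑ j, c j • v j = 0 :=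
    (huniq _ ⟨Submodule.sum_mem _ fun j _ => V.smul_mem _ (hv_mem j), hvanish⟩).trans
      (huniq 0 ⟨V.zero_mem, fun l => rfl⟩).symm
  exact hc (funext (Fintype.linearIndependent_iff.1 hv_indep c hzero))

lemma IsChebyshev.inv_mulVec_apply_ne_zero (hV : IsChebyshev n V) (hv_mem : ∀ j, v j ∈ V)
    (hv_indep : LinearIndependent ℝ v) (hξ : Function.Injective ξ) {p : X} (hp : ∀ l, ξ l ≠ p)
    (l : Fin n) : ((Matrix.of fun j l => v j (ξ l))⁻¹ *ᵥ fun j => v j p) l ≠ 0 := by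
  set B := Matrix.of fun j l => v j (ξ l)
  have hcramer := congrFun (det_smul_inv_mulVec_eq_cramer B (fun j => v j p)
    (isUnit_iff_ne_zero.2 (hV.det_ne_zero hv_mem hv_indep hξ))) l
  have hupdate : B.updateCol l (fun j => v j p) =
      Matrix.of fun j l' => v j (Function.update ξ l p l') := by
    ext j l'
    rcases eq_or_ne l' l with rfl | h <;> simp [B, *]
  rw [Pi.smul_apply, smul_eq_mul, cramer_apply, hupdate] at hcramer
  intro h0
  rw [h0, mul_zero] at hcramer
  exact hV.det_ne_zero hv_mem hv_indep (hξ.update_of_forall_ne hp l) hcramer.symm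

end Chebyshev

theorem l1_minimizer_support_propagates_on_interval_general
    (n m : ℕ) (V : Submodule ℝ C(Set.Icc (-1 : ℝ) 1, ℝ))
    (hCheb : IsChebyshev n V)
    (v : Fin n → C(Set.Icc (-1 : ℝ) 1, ℝ))
    (hv_mem : ∀ j, v j ∈ V)
    (hv_indep : LinearIndependent ℝ v)
    (xpt : Fin m → Set.Icc (-1 : ℝ) 1) (hxpt : Function.Injective xpt)
    (I : Set ℝ) (hI : I ⊆ Set.Icc (-1 : ℝ) 1) (hIconn : I.OrdConnected)
    (hIx : ∀ i, (xpt i : ℝ) ∉ I)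
    (σ : Fin n → Fin m) (hσ : Function.Injective σ)
    (M : Matrix (Fin n) (Fin m) ℝ) (hM : ∀ j i, M j i = v j (xpt i))
    (MS : Matrix (Fin n) (Fin n) ℝ) (hMS : ∀ j l, MS j l = v j (xpt (σ l)))
    (z : ℝ) (hzI : z ∈ I)
    (hz_min : ∀ a : Fin m → ℝ, M.mulVec a = (fun j => v j ⟨z, hI hzI⟩) →
      ∑ i, |sparseExt σ (MS⁻¹.mulVec fun j => v j ⟨z, hI hzI⟩) i| ≤ ∑ i, |a i|) :
    ∀ x : ℝ, ∀ hxI : x ∈ I,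
      M.mulVec (sparseExt σ (MS⁻¹.mulVec fun j => v j ⟨x, hI hxI⟩)) =
          (fun j => v j ⟨x, hI hxI⟩) ∧
        ∀ a : Fin m → ℝ, M.mulVec a = (fun j => v j ⟨x, hI hxI⟩) →
          ∑ i, |sparseExt σ (MS⁻¹.mulVec fun j => v j ⟨x, hI hxI⟩) i| ≤ ∑ i, |a i| := by
  obtain rfl : MS = M.submatrix id σ := Matrix.ext fun j l => by simp [hM, hMS]
  have hMS_eval : M.submatrix id σ = Matrix.of fun j l => v j (xpt (σ l)) := Matrix.ext hMS
  have hdet : IsUnit (M.submatrix id σ).det := by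
    rw [hMS_eval, isUnit_iff_ne_zero]
    exact hCheb.det_ne_zero hv_mem hv_indep (hxpt.comp hσ)
  set s : Set (Set.Icc (-1 : ℝ) 1) := Subtype.val ⁻¹' I
  set coeff : Set.Icc (-1 : ℝ) 1 → Fin n → ℝ := fun p => (M.submatrix id σ)⁻¹ *ᵥ fun j => v j p
  have hcoeff_ne : ∀ p ∈ s, ∀ l, coeff p l ≠ 0 := fun p hp => by
    simp only [coeff, hMS_eval]
    exact hCheb.inv_mulVec_apply_ne_zero hv_mem hv_indep (hxpt.comp hσ)
      fun l' h => hIx _ (h ▸ hp)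
  have hs : IsPreconnected s := Topology.IsInducing.subtypeVal.isPreconnected_image.1 <| by
    rw [Subtype.image_preimage_coe, Set.inter_eq_right.2 hI]
    exact hIconn.isPreconnected
  set pz : Set.Icc (-1 : ℝ) 1 := ⟨z, hI hzI⟩
  have hsign : ∀ p ∈ s, ∀ l, sign (coeff p l) = sign (coeff pz l) := fun p hp l =>
    hs.sign_eq_of_ne_zero (by fun_prop) (fun q hq => hcoeff_ne q hq l) hp hzI
  have hcert := IsL1Minimizer.abs_vecMul_le_one hσ hdet (hcoeff_ne pz hzI) <| by
    rwa [IsL1Minimizer, mulVec_sparseExt_inv_mulVec hdet]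
  intro x hxI
  refine ⟨mulVec_sparseExt_inv_mulVec hdet _, isL1Minimizer_of_abs_vecMul_le_one _ hcert ?_⟩
  rw [sum_abs_sparseExt hσ, ← dotProduct_mulVec]
  simp only [dotProduct, ← hsign ⟨x, hI hxI⟩ hxI, coeff, sign_mul_self]

/-- if on an interval `I ⊆ [-1,1]` containing none of the points
`x¹, …, xᵐ`, the vector supported on `S` with values `M_S⁻¹ b(z)` is an `ℓ¹`-minimizer
subject to `Ma = b(z)` for some `z ∈ I`, then for every `x ∈ I` the vector supported
on `S` with values `M_S⁻¹ b(x)` is an `ℓ¹`-minimizer subject to `Ma = b(x)`. -/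
theorem l1_minimizer_support_propagates_on_interval
    (n m : ℕ) (V : Submodule ℝ C(Set.Icc (-1 : ℝ) 1, ℝ))
    (hCheb : IsChebyshev n V)
    (v : Fin n → C(Set.Icc (-1 : ℝ) 1, ℝ))
    (hv_mem : ∀ j, v j ∈ V)
    (hv_indep : LinearIndependent ℝ v)
    (hv_span : Submodule.span ℝ (Set.range v) = V)
    (xpt : Fin m → Set.Icc (-1 : ℝ) 1) (hxpt : Function.Injective xpt)
    (I : Set ℝ) (hI : I ⊆ Set.Icc (-1 : ℝ) 1) (hIconn : I.OrdConnected)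
    (hIx : ∀ i, (xpt i : ℝ) ∉ I)
    (σ : Fin n → Fin m) (hσ : Function.Injective σ)
    (M : Matrix (Fin n) (Fin m) ℝ) (hM : ∀ j i, M j i = v j (xpt i))
    (MS : Matrix (Fin n) (Fin n) ℝ) (hMS : ∀ j l, MS j l = v j (xpt (σ l)))
    (z : ℝ) (hzI : z ∈ I)
    (hz_min : ∀ a : Fin m → ℝ, M.mulVec a = (fun j => v j ⟨z, hI hzI⟩) →
      ∑ i, |sparseExt σ (MS⁻¹.mulVec fun j => v j ⟨z, hI hzI⟩) i| ≤ ∑ i, |a i|) :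
    ∀ x : ℝ, ∀ hxI : x ∈ I,
      M.mulVec (sparseExt σ (MS⁻¹.mulVec fun j => v j ⟨x, hI hxI⟩)) =
          (fun j => v j ⟨x, hI hxI⟩) ∧
        ∀ a : Fin m → ℝ, M.mulVec a = (fun j => v j ⟨x, hI hxI⟩) →
          ∑ i, |sparseExt σ (MS⁻¹.mulVec fun j => v j ⟨x, hI hxI⟩) i| ≤ ∑ i, |a i| :=
  l1_minimizer_support_propagates_on_interval_general n m V hCheb v hv_mem hv_indep xpt hxpt I hI
    hIconn hIx σ hσ M hM MS hMS z hzI hz_min
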